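/- The set A = {2^n : n ∈ ℤ} is singly anticipated by the set B = {2^n : n ∈ ℤ, n ≤ 0}: every A-martingale is dominated by a B-martingale, even though no positive multiple of A is contained in the closure of B. -/

import Mathlib

/-- A martingale: a betting strategy on binary sequences. -/
def IsMartingale (M : List Bool → ℝ) : Prop :=
  ∀ σ : List Bool, M σ = (M (σ ++ [true]) + M (σ ++ [false])) / 2

/-- The increment (wager) of a martingale at a history `σ`. -/
def inc (M : List Bool → ℝ) (σ : List Bool) : ℝ := M (σ ++ [true]) - M σ

/-- An `A`-martingale: all absolute increments lie in `A`. -/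
def IsAMartingale (A : Set ℝ) (M : List Bool → ℝ) : Prop :=
  IsMartingale M ∧ ∀ σ : List Bool, |inc M σ| ∈ A

/-- The first `n` bits of an infinite binary sequence, as a list. -/
def pref (X : ℕ → Bool) (n : ℕ) : List Bool := (List.range n).map X

/-- `M` succeeds on `X`: its value tends to infinity and it never bets more than it has. -/
def Succeeds (M : List Bool → ℝ) (X : ℕ → Bool) : Prop :=
  Filter.Tendsto (fun n => M (pref X n)) Filter.atTop Filter.atTop ∧
  ∀ n : ℕ, |inc M (pref X n)| ≤ M (pref X n)

/-- `N` dominates `M`: `N` succeeds on every sequence on which `M` succeeds. -/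
def Dominates (N M : List Bool → ℝ) : Prop :=
  ∀ X : ℕ → Bool, Succeeds M X → Succeeds N X

/-- `B` singly anticipates `A`: every `A`-martingale is dominated by some `B`-martingale. -/
def SinglyAnticipates (B A : Set ℝ) : Prop :=
  ∀ M : List Bool → ℝ, IsAMartingale A M →
    ∃ N : List Bool → ℝ, IsAMartingale B N ∧ Dominates N M

/-- `B` (countably) anticipates `A`: every `A`-martingale is dominated by a countable
set of `B`-martingales. -/
def Anticipates (B A : Set ℝ) : Prop :=
  ∀ M : List Bool → ℝ, IsAMartingale A M →
    ∃ N : ℕ → List Bool → ℝ, (∀ i, IsAMartingale B (N i)) ∧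
      ∀ X : ℕ → Bool, Succeeds M X → ∃ i, Succeeds (N i) X

/-!
For a non-increasing density `f ≥ 0` the potential `F y = ∫₀^y f` is concave:
`F (y + t) ≤ F y + t * f y`. Hence the martingale `N` that starts with `F (M [])` and stakes
`f (M σ)` times `M`'s stake keeps `F ∘ M ≤ N` along every path on which `M` never overbets. If
`∫₀^∞ f = ∞`, then `N → ∞` wherever `M → ∞`, and `N` never overbets either, as
`f (M σ) * |inc M σ| ≤ f (M σ) * M σ ≤ F (M σ) ≤ N σ`.

For `A = {2^n}` take `f x = 2^(-max ⌊log₂ x⌋ 0)`: it rescales a stake `2^k ≤ x` to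
`2^(k - max ⌊log₂ x⌋ 0) ∈ B`, and `F` grows by at least `1/2` on each interval `[2^n, 2^(n+1)]`.
No multiple `r A` fits into `closure B ⊆ (-∞, 1]` since `r * 2^n` is unbounded.
-/

open Filter intervalIntegral

section AntitoneIntegral

variable {f : ℝ → ℝ}

theorem Antitone.intervalIntegral_le_sub_mul (hf : Antitone f) (a b : ℝ) :
    ∫ t in a..b, f t ≤ (b - a) * f a := by
  rcases le_total a b with hab | hba
  · calc ∫ t in a..b, f t ≤ ∫ _ in a..b, f a :=
          integral_mono_on hab hf.intervalIntegrable intervalIntegrable_const fun t ht => hf ht.1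
      _ = (b - a) * f a := by simp
  · have : (a - b) * f a ≤ ∫ t in b..a, f t :=
      calc (a - b) * f a = ∫ _ in b..a, f a := by simp
        _ ≤ ∫ t in b..a, f t :=
          integral_mono_on hba intervalIntegrable_const hf.intervalIntegrable fun t ht => hf ht.2
    rw [integral_symm]
    linarith

theorem Antitone.sub_mul_le_intervalIntegral (hf : Antitone f) (a b : ℝ) :
    (b - a) * f b ≤ ∫ t in a..b, f t := by
  have := hf.intervalIntegral_le_sub_mul b a
  rw [integral_symm] at this
  linarith

theorem Antitone.integral_le_integral_add_sub_mul (hf : Antitone f) (y z : ℝ) :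
    ∫ t in 0..z, f t ≤ (∫ t in 0..y, f t) + (z - y) * f y := by
  rw [← integral_add_adjacent_intervals (b := y) hf.intervalIntegrable hf.intervalIntegrable]
  linarith [hf.intervalIntegral_le_sub_mul y z]

theorem Antitone.mul_le_integral (hf : Antitone f) (y : ℝ) : y * f y ≤ ∫ t in 0..y, f t := by
  have := hf.integral_le_integral_add_sub_mul y 0
  rw [integral_same] at this
  linarith

theorem Antitone.monotone_integral (hf : Antitone f) (hf0 : ∀ x, 0 ≤ f x) :
    Monotone fun y => ∫ t in 0..y, f t := by
  intro y z hyz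
  show ∫ t in 0..y, f t ≤ ∫ t in 0..z, f t
  rw [← integral_add_adjacent_intervals (b := y) (c := z) hf.intervalIntegrable
    hf.intervalIntegrable]
  linarith [hf.sub_mul_le_intervalIntegral y z, mul_nonneg (sub_nonneg.2 hyz) (hf0 z)]

end AntitoneIntegral

section Martingale

theorem pref_zero (X : ℕ → Bool) : pref X 0 = [] := rfl

theorem pref_succ (X : ℕ → Bool) (n : ℕ) : pref X (n + 1) = pref X n ++ [X n] := by
  simp [pref, List.range_succ]

theorem IsMartingale.apply_append_singleton {M : List Bool → ℝ} (hM : IsMartingale M)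
    (σ : List Bool) (b : Bool) :
    M (σ ++ [b]) = M σ + if b then inc M σ else -inc M σ := by
  cases b <;> simp only [inc, Bool.false_eq_true, if_true, if_false] <;> linarith [hM σ]

def wagerMartingale (c : ℝ) (g : List Bool → ℝ) (σ : List Bool) : ℝ :=
  c + ∑ i ∈ Finset.range σ.length, if σ.getD i false then g (σ.take i) else -g (σ.take i)

variable (c : ℝ) (g : List Bool → ℝ)

theorem wagerMartingale_nil : wagerMartingale c g [] = c := by
  simp [wagerMartingale]

theorem wagerMartingale_append_singleton (σ : List Bool) (b : Bool) :
    wagerMartingale c g (σ ++ [b]) = wagerMartingale c g σ + if b then g σ else -g σ := by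
  have hprefix : ∀ i ∈ Finset.range σ.length,
      (if (σ ++ [b]).getD i false then g ((σ ++ [b]).take i) else -g ((σ ++ [b]).take i)) =
        if σ.getD i false then g (σ.take i) else -g (σ.take i) := by
    intro i hi
    have hi := Finset.mem_range.mp hi
    rw [List.getD_append _ _ _ _ hi, List.take_append_of_le_length hi.le]
  simp only [wagerMartingale, List.length_append, List.length_singleton, Finset.sum_range_succ,
    Finset.sum_congr rfl hprefix, List.getD_append_right _ _ _ _ le_rfl, List.take_left]
  simp [add_assoc]

theorem inc_wagerMartingale (σ : List Bool) : inc (wagerMartingale c g) σ = g σ := by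
  simp [inc, wagerMartingale_append_singleton]

theorem isMartingale_wagerMartingale : IsMartingale (wagerMartingale c g) := by
  intro σ
  simp only [wagerMartingale_append_singleton, if_true, Bool.false_eq_true, if_false]
  ring

end Martingale

section Domination

variable {A B : Set ℝ} {f : ℝ → ℝ} {M : List Bool → ℝ} {X : ℕ → Bool}

-- The `max` keeps the stake in `B` where `M` overbets; on the paths that matter it is `M σ`.
def scaledStake (f : ℝ → ℝ) (M : List Bool → ℝ) (σ : List Bool) : ℝ :=
  f (max (M σ) |inc M σ|) * inc M σ

noncomputable def dominatingMartingale (f : ℝ → ℝ) (M : List Bool → ℝ) : List Bool → ℝ :=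
  wagerMartingale (∫ t in 0..M [], f t) (scaledStake f M)

theorem isAMartingale_dominatingMartingale (hf0 : ∀ x, 0 ≤ f x)
    (hAB : ∀ a ∈ A, ∀ x, a ≤ x → f x * a ∈ B) (hM : IsAMartingale A M) :
    IsAMartingale B (dominatingMartingale f M) := by
  refine ⟨isMartingale_wagerMartingale _ _, fun σ => ?_⟩
  rw [dominatingMartingale, inc_wagerMartingale, scaledStake, abs_mul, abs_of_nonneg (hf0 _)]
  exact hAB _ (hM.2 σ) _ (le_max_right _ _)

theorem integral_le_dominatingMartingale_pref (hf : Antitone f) (hM : IsMartingale M)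
    (hbet : ∀ n, |inc M (pref X n)| ≤ M (pref X n)) (n : ℕ) :
    ∫ t in 0..M (pref X n), f t ≤ dominatingMartingale f M (pref X n) := by
  induction n with
  | zero => simp [pref_zero, dominatingMartingale, wagerMartingale_nil]
  | succ n ih =>
    set σ := pref X n
    have hstake : scaledStake f M σ = f (M σ) * inc M σ := by
      rw [scaledStake, max_eq_left (hbet n)]
    rw [pref_succ, hM.apply_append_singleton, dominatingMartingale,
      wagerMartingale_append_singleton, ← dominatingMartingale, hstake]
    cases X n
    · simp only [Bool.false_eq_true, if_false]
      linarith [hf.integral_le_integral_add_sub_mul (M σ) (M σ + -inc M σ)]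
    · simp only [if_true]
      linarith [hf.integral_le_integral_add_sub_mul (M σ) (M σ + inc M σ)]

theorem succeeds_dominatingMartingale (hf : Antitone f) (hf0 : ∀ x, 0 ≤ f x)
    (hdiv : Tendsto (fun y => ∫ t in 0..y, f t) atTop atTop) (hM : IsMartingale M)
    (hS : Succeeds M X) : Succeeds (dominatingMartingale f M) X := by
  have hF := integral_le_dominatingMartingale_pref hf hM hS.2
  refine ⟨tendsto_atTop_mono hF (hdiv.comp hS.1), fun n => ?_⟩
  have hbet := hS.2 n
  calc |inc (dominatingMartingale f M) (pref X n)|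
      = f (M (pref X n)) * |inc M (pref X n)| := by
        rw [dominatingMartingale, inc_wagerMartingale, scaledStake, max_eq_left hbet, abs_mul,
          abs_of_nonneg (hf0 _)]
    _ ≤ f (M (pref X n)) * M (pref X n) := mul_le_mul_of_nonneg_left hbet (hf0 _)
    _ ≤ ∫ t in 0..M (pref X n), f t := by linarith [hf.mul_le_integral (M (pref X n))]
    _ ≤ dominatingMartingale f M (pref X n) := hF n

theorem singlyAnticipates_of_antitone (hf : Antitone f) (hf0 : ∀ x, 0 ≤ f x)
    (hdiv : Tendsto (fun y => ∫ t in 0..y, f t) atTop atTop)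
    (hAB : ∀ a ∈ A, ∀ x, a ≤ x → f x * a ∈ B) : SinglyAnticipates B A := fun M hM =>
  ⟨dominatingMartingale f M, isAMartingale_dominatingMartingale hf0 hAB hM,
    fun _ hS => succeeds_dominatingMartingale hf hf0 hdiv hM.1 hS⟩

end Domination

noncomputable def dyadicDensity (x : ℝ) : ℝ := 2 ^ (-max (Int.log 2 x) 0)

theorem monotone_max_log_zero : Monotone fun x : ℝ => max (Int.log 2 x) 0 := by
  intro x y hxy
  rcases le_or_gt x 0 with hx | hx
  · simp [Int.log_of_right_le_zero _ hx]
  · exact max_le_max (Int.log_mono_right hx hxy) le_rfl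

theorem dyadicDensity_antitone : Antitone dyadicDensity := fun _ _ hxy =>
  zpow_le_zpow_right₀ one_le_two (neg_le_neg (monotone_max_log_zero hxy))

theorem dyadicDensity_nonneg (x : ℝ) : 0 ≤ dyadicDensity x := by
  unfold dyadicDensity; positivity

theorem dyadicDensity_two_pow (n : ℕ) : dyadicDensity (2 ^ n) = (2 ^ n)⁻¹ := by
  have : Int.log 2 ((2 : ℝ) ^ n) = n := by exact_mod_cast Int.log_zpow (R := ℝ) one_lt_two n
  simp [dyadicDensity, this]

theorem dyadicDensity_mul_zpow_mem {k : ℤ} {x : ℝ} (hx : 2 ^ k ≤ x) :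
    dyadicDensity x * 2 ^ k ∈ {x : ℝ | ∃ n : ℤ, n ≤ 0 ∧ x = 2 ^ n} := by
  have hk : k ≤ Int.log 2 x := (Int.zpow_le_iff_le_log one_lt_two
    (lt_of_lt_of_le (by positivity) hx)).1 (by exact_mod_cast hx)
  refine ⟨-max (Int.log 2 x) 0 + k, by omega, ?_⟩
  rw [dyadicDensity, zpow_add₀ two_ne_zero]

theorem div_two_le_integral_dyadicDensity_two_pow (n : ℕ) :
    n / 2 ≤ ∫ t in 0..2 ^ n, dyadicDensity t := by
  induction n with
  | zero => simpa using dyadicDensity_antitone.monotone_integral dyadicDensity_nonneg zero_le_one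
  | succ n ih =>
    have hstep := dyadicDensity_antitone.sub_mul_le_intervalIntegral (2 ^ n) (2 ^ (n + 1))
    have hhalf : ((2 : ℝ) ^ (n + 1) - 2 ^ n) * dyadicDensity (2 ^ (n + 1)) = 1 / 2 := by
      rw [dyadicDensity_two_pow, pow_succ]
      field_simp
      ring
    rw [← integral_add_adjacent_intervals (b := 2 ^ n) dyadicDensity_antitone.intervalIntegrable
      dyadicDensity_antitone.intervalIntegrable]
    push_cast
    linarith

theorem tendsto_integral_dyadicDensity :
    Tendsto (fun y => ∫ t in 0..y, dyadicDensity t) atTop atTop := by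
  refine (dyadicDensity_antitone.monotone_integral dyadicDensity_nonneg).tendsto_atTop_atTop
    fun b => ?_
  obtain ⟨n, hn⟩ := exists_nat_ge (2 * b)
  exact ⟨2 ^ n, by linarith [div_two_le_integral_dyadicDensity_two_pow n]⟩

theorem closure_setOf_zpow_nonpos_subset_Iic :
    closure {x : ℝ | ∃ n : ℤ, n ≤ 0 ∧ x = 2 ^ n} ⊆ Set.Iic 1 :=
  closure_minimal (fun _ ⟨_, hn, hx⟩ => hx ▸ Set.mem_Iic.2 (zpow_le_one_of_nonpos₀ one_le_two hn))
    isClosed_Iic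

/-- `B = {2 ^ n : n ≤ 0}` singly anticipates `A = {2 ^ n : n ∈ ℤ}`, even though no
positive multiple of `A` is contained in the closure of `B`. -/
theorem powers_of_two_example :
    SinglyAnticipates {x : ℝ | ∃ n : ℤ, n ≤ 0 ∧ x = 2 ^ n} {x : ℝ | ∃ n : ℤ, x = 2 ^ n} ∧
    ∀ r : ℝ, 0 < r →
      ¬ ((fun a => r * a) '' {x : ℝ | ∃ n : ℤ, x = 2 ^ n} ⊆
        closure {x : ℝ | ∃ n : ℤ, n ≤ 0 ∧ x = 2 ^ n}) := by
  refine ⟨singlyAnticipates_of_antitone dyadicDensity_antitone dyadicDensity_nonneg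
    tendsto_integral_dyadicDensity ?_, fun r hr hsub => ?_⟩
  · rintro _ ⟨k, rfl⟩ x hx
    exact dyadicDensity_mul_zpow_mem hx
  · obtain ⟨n, hn⟩ := pow_unbounded_of_one_lt r⁻¹ one_lt_two
    have hle : r * 2 ^ n ≤ 1 :=
      closure_setOf_zpow_nonpos_subset_Iic (hsub ⟨2 ^ (n : ℤ), ⟨n, rfl⟩, by simp⟩)
    rw [inv_lt_iff_one_lt_mul₀ hr] at hn
    linarith
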